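/- arXiv:1101.4015 — 6 statements merged into one kernel-verified Lean document; each statement's English description precedes it below -/
import Mathlib

section
/- Let a, b > 0 and let u : [0,∞) → ℝ be a differentiable function such that u(t) ≥ 0 for all t ≥ 0 and u'(t) ≤ a·u(t) − b·u(t)² for all t > 0. Then u is bounded above; more precisely sup_{t ≥ 0} u(t) ≤ max(u(0), a/b). -/
/-! Above the level `a / b` the logistic inequality forces `u' < 0`, so `u` can never cross a
barrier `max (u 0) (a / b) + ε` from below (the fencing principle
`image_le_of_deriv_right_lt_deriv_boundary'`); letting `ε → 0` gives the bound. -/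

open Set

theorem image_le_of_deriv_neg_of_gt {f f' : ℝ → ℝ} {a b M : ℝ}
    (hf : ContinuousOn f (Icc a b)) (hf' : ∀ x ∈ Ico a b, HasDerivWithinAt f (f' x) (Ici x) x)
    (ha : f a ≤ M) (hneg : ∀ x ∈ Ioo a b, M < f x → f' x < 0) :
    ∀ x ∈ Icc a b, f x ≤ M := by
  intro x hx
  refine le_of_forall_pos_lt_add fun ε hε => ?_
  have hε2 : 0 < ε / 2 := half_pos hε
  have hle : f x ≤ M + ε / 2 :=
    image_le_of_deriv_right_lt_deriv_boundary' (B := fun _ => M + ε / 2) hf hf'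
      (by linarith) continuousOn_const (fun y _ => hasDerivWithinAt_const y _ _)
      (fun y hy hfy => by
        have hya : a < y := lt_of_le_of_ne hy.1 fun hay => by subst hay; linarith
        exact hneg y ⟨hya, hy.2⟩ (by linarith)) hx
  linarith

theorem logistic_neg_of_div_lt {a b y : ℝ} (ha : 0 < a) (hb : 0 < b) (hy : a / b < y) :
    a * y - b * y ^ 2 < 0 := by
  have hy_pos : 0 < y := (div_pos ha hb).trans hy
  have hby : a < b * y := (div_lt_iff₀' hb).mp hy
  calc a * y - b * y ^ 2 = y * (a - b * y) := by ring
    _ < 0 := mul_neg_of_pos_of_neg hy_pos (sub_neg.mpr hby)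

theorem logistic_inequality_bounded_general
    (a b : ℝ) (ha : 0 < a) (hb : 0 < b)
    (u u' : ℝ → ℝ)
    (hderiv : ∀ t : ℝ, 0 ≤ t → HasDerivAt u (u' t) t)
    (hineq : ∀ t : ℝ, 0 < t → u' t ≤ a * u t - b * (u t) ^ 2) :
    ∀ t : ℝ, 0 ≤ t → u t ≤ max (u 0) (a / b) := by
  intro t ht
  refine image_le_of_deriv_neg_of_gt (a := 0) (b := t)
    (fun x hx => (hderiv x hx.1).continuousAt.continuousWithinAt)
    (fun x hx => (hderiv x hx.1).hasDerivWithinAt) (le_max_left _ _)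
    (fun x hx hux => ?_) t ⟨ht, le_rfl⟩
  exact (hineq x hx.1).trans_lt
    (logistic_neg_of_div_lt ha hb ((le_max_right _ _).trans_lt hux))

/-- Logistic comparison lemma (boundedness): if `u : [0,∞) → ℝ` is differentiable,
nonnegative, and satisfies the logistic differential inequality
`u'(t) ≤ a·u(t) − b·u(t)²` for `t > 0`, with `a, b > 0`, then `u` is bounded above by
`max (u 0) (a / b)`. -/
theorem logistic_inequality_bounded
    (a b : ℝ) (ha : 0 < a) (hb : 0 < b)
    (u u' : ℝ → ℝ)
    (hderiv : ∀ t : ℝ, 0 ≤ t → HasDerivAt u (u' t) t)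
    (hnonneg : ∀ t : ℝ, 0 ≤ t → 0 ≤ u t)
    (hineq : ∀ t : ℝ, 0 < t → u' t ≤ a * u t - b * (u t) ^ 2) :
    ∀ t : ℝ, 0 ≤ t → u t ≤ max (u 0) (a / b) :=
  logistic_inequality_bounded_general a b ha hb u u' hderiv hineq
end

section
/- Fix real parameters r₁, r₂ ∈ ℝ, β₁, β₂ > 0 and nonnegative λ₁₁, λ₁₂, λ₂₁, λ₂₂. For every t₀ ≥ 0 and every initial value y = (y₁, y₂) ∈ ℝ₊² (the closed nonnegative quadrant), the Lotka–Volterra system y'(t) = c(y(t)), y(t₀) = y, admits a unique solution defined on all of [t₀, ∞); this solution takes values in ℝ₊² for all t ≥ t₀ (in particular it does not explode in finite time). -/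
open Set

/-- The Lotka–Volterra vector field
`c(y₁,y₂) = (y₁(r₁ − β₁(λ₁₁y₁ + λ₁₂y₂)), y₂(r₂ − β₂(λ₂₁y₁ + λ₂₂y₂)))`. -/
noncomputable def LVfield (r₁ r₂ β₁ β₂ l₁₁ l₁₂ l₂₁ l₂₂ : ℝ) (y : ℝ × ℝ) : ℝ × ℝ :=
  (y.1 * (r₁ - β₁ * (l₁₁ * y.1 + l₁₂ * y.2)),
   y.2 * (r₂ - β₂ * (l₂₁ * y.1 + l₂₂ * y.2)))

/-!
Local existence and uniqueness come from Picard–Lindelöf, since the field is polynomial and hence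
locally Lipschitz. Each coordinate solves a scalar equation `u' = u g` with `g` continuous along
the solution, so `u t = u a * exp (∫ g)`: the closed quadrant is invariant, and on it
`g ≤ |r₁| + |r₂|`, which gives an exponential a priori bound. Over any bounded time interval the solution therefore stays in a
fixed ball, on which Picard–Lindelöf provides a uniform step length, and finitely many steps reach
any time `T`.
-/

open Metric Real
open scoped NNReal Topology

section IntegralCurve

variable {E : Type*} [NormedAddCommGroup E] [NormedSpace ℝ E] {v : ℝ → E → E}

theorem IsIntegralCurveOn.piecewise_le {γ γ' : ℝ → E} {s s' : Set ℝ} {b : ℝ}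
    (hγ : IsIntegralCurveOn γ v s) (hγ' : IsIntegralCurveOn γ' v s')
    (hs : s ⊆ Iic b) (hs' : s' ⊆ Ici b) (hbs : b ∈ s) (hbs' : b ∈ s') (hb : γ b = γ' b) :
    IsIntegralCurveOn (fun t ↦ if t ≤ b then γ t else γ' t) v (s ∪ s') := by
  set F := fun t ↦ if t ≤ b then γ t else γ' t
  have hFγ : EqOn F γ s := fun t ht ↦ if_pos (hs ht)
  have hFγ' : EqOn F γ' s' := fun t ht ↦ by
    rcases (mem_Ici.1 (hs' ht)).eq_or_lt with rfl | h
    · simp [F, hb]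
    · simp [F, not_le.2 h]
  intro t ht
  refine HasDerivWithinAt.union ?_ ?_
  · by_cases hts : t ∈ s
    · rw [hFγ hts]
      exact (hγ t hts).congr hFγ (hFγ hts)
    · have hbt : b < t := (hs' (ht.resolve_left hts)).lt_of_ne (ne_of_mem_of_not_mem hbs hts)
      exact HasFDerivWithinAt.of_notMem_closure fun h ↦
        hbt.not_ge (closure_minimal hs isClosed_Iic h)
  · by_cases hts : t ∈ s'
    · rw [hFγ' hts]
      exact (hγ' t hts).congr hFγ' (hFγ' hts)
    · have htb : t < b := (hs (ht.resolve_right hts)).lt_of_ne (ne_of_mem_of_not_mem hbs' hts).symm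
      exact HasFDerivWithinAt.of_notMem_closure fun h ↦
        htb.not_ge (closure_minimal hs' isClosed_Ici h)

theorem exists_isIntegralCurveOn_Icc_of_forall_mem {s : Set E} {ε a T : ℝ} {x₀ : E}
    (hε : 0 < ε) (hT : a ≤ T)
    (hstep : ∀ t₁, ∀ x ∈ s, ∃ γ : ℝ → E, γ t₁ = x ∧ IsIntegralCurveOn γ v (Icc t₁ (t₁ + ε)))
    (hmem : ∀ b ∈ Icc a T, ∀ γ : ℝ → E, γ a = x₀ → IsIntegralCurveOn γ v (Icc a b) → γ b ∈ s) :
    ∃ γ : ℝ → E, γ a = x₀ ∧ IsIntegralCurveOn γ v (Icc a T) := by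
  have key (n : ℕ) (hn : a + n * ε ≤ T + ε) :
      ∃ γ : ℝ → E, γ a = x₀ ∧ IsIntegralCurveOn γ v (Icc a (a + n * ε)) := by
    induction n with
    | zero =>
      refine ⟨fun _ ↦ x₀, rfl, fun t _ ↦ HasFDerivWithinAt.of_subsingleton ?_⟩
      simp
    | succ n ih =>
      push_cast at hn
      obtain ⟨γ, hγ₀, hγ⟩ := ih (by linarith)
      set q := a + n * ε
      have hq : q ∈ Icc a T := ⟨le_add_of_nonneg_right (by positivity), by linarith⟩
      obtain ⟨γ', hγ'q, hγ'⟩ := hstep q (γ q) (hmem q hq γ hγ₀ hγ)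
      refine ⟨fun t ↦ if t ≤ q then γ t else γ' t, by simp only [if_pos hq.1, hγ₀], ?_⟩
      have := hγ.piecewise_le hγ' (fun _ h ↦ h.2) (fun _ h ↦ h.1) ⟨hq.1, le_rfl⟩
        ⟨le_rfl, by linarith⟩ hγ'q.symm
      rwa [Icc_union_Icc_eq_Icc hq.1 (by linarith), show q + ε = a + (n + 1 : ℕ) * ε by
        push_cast; ring] at this
  set n := ⌈(T - a) / ε⌉₊
  have hn : (n : ℝ) < (T - a) / ε + 1 := Nat.ceil_lt_add_one (div_nonneg (sub_nonneg.2 hT) hε.le)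
  have hTn : T - a ≤ n * ε := (div_le_iff₀ hε).1 (Nat.le_ceil _)
  obtain ⟨γ, hγ₀, hγ⟩ := key n <| by
    have := mul_lt_mul_of_pos_right hn hε
    rw [add_mul, div_mul_cancel₀ _ hε.ne', one_mul] at this
    linarith
  exact ⟨γ, hγ₀, hγ.mono (Icc_subset_Icc_right (by linarith))⟩

theorem exists_isIntegralCurveOn_Ici_of_forall_exists_Icc {a : ℝ} {x₀ : E}
    (hex : ∀ T, ∃ γ : ℝ → E, γ a = x₀ ∧ IsIntegralCurveOn γ v (Icc a T))
    (huniq : ∀ T, ∀ γ γ' : ℝ → E, γ a = γ' a → IsIntegralCurveOn γ v (Icc a T) →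
      IsIntegralCurveOn γ' v (Icc a T) → EqOn γ γ' (Icc a T)) :
    ∃ γ : ℝ → E, γ a = x₀ ∧ IsIntegralCurveOn γ v (Ici a) := by
  choose Γ hΓ₀ hΓ using hex
  refine ⟨fun t ↦ Γ (t + 1) t, hΓ₀ _, fun t ht ↦ ?_⟩
  have hagree : EqOn (fun s ↦ Γ (s + 1) s) (Γ (t + 1)) (Icc a (t + 1)) := fun s hs ↦
    huniq s _ _ ((hΓ₀ _).trans (hΓ₀ _).symm)
      ((hΓ _).mono (Icc_subset_Icc_right (by linarith))) ((hΓ _).mono (Icc_subset_Icc_right hs.2))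
      ⟨hs.1, le_rfl⟩
  have hIcc : Icc a (t + 1) ∈ 𝓝[Ici a] t :=
    inter_mem_nhdsWithin _ (Iic_mem_nhds (by linarith))
  rw [hagree ⟨ht, by linarith⟩]
  exact ((hΓ _ t ⟨ht, by linarith⟩).congr hagree (hagree ⟨ht, by linarith⟩)).mono_of_mem_nhdsWithin
    hIcc

theorem IsIntegralCurveOn.eqOn_Icc_of_locallyLipschitz {f : E → E} (hf : LocallyLipschitz f)
    {γ γ' : ℝ → E} {a b : ℝ} (hγ : IsIntegralCurveOn γ (fun _ ↦ f) (Icc a b))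
    (hγ' : IsIntegralCurveOn γ' (fun _ ↦ f) (Icc a b)) (ha : γ a = γ' a) :
    EqOn γ γ' (Icc a b) := by
  have hK : IsCompact (γ '' Icc a b ∪ γ' '' Icc a b) :=
    (isCompact_Icc.image_of_continuousOn hγ.continuousOn).union
      (isCompact_Icc.image_of_continuousOn hγ'.continuousOn)
  obtain ⟨K, hK⟩ := hf.locallyLipschitzOn.exists_lipschitzOnWith_of_compact hK
  exact ODE_solution_unique_of_mem_Icc_right (fun _ _ ↦ hK) hγ.continuousOn
    (fun t ht ↦ (hγ t (Ico_subset_Icc_self ht)).mono_of_mem_nhdsWithin (Icc_mem_nhdsGE_of_mem ht))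
    (fun t ht ↦ .inl (mem_image_of_mem _ (Ico_subset_Icc_self ht))) hγ'.continuousOn
    (fun t ht ↦ (hγ' t (Ico_subset_Icc_self ht)).mono_of_mem_nhdsWithin (Icc_mem_nhdsGE_of_mem ht))
    (fun t ht ↦ .inr (mem_image_of_mem _ (Ico_subset_Icc_self ht))) ha

variable [CompleteSpace E]

theorem exists_isIntegralCurveOn_Icc_of_lipschitzOnWith {f : E → E} {x : E} {r C K : ℝ≥0}
    (hK : LipschitzOnWith K f (closedBall x r)) (hC : ∀ y ∈ closedBall x r, ‖f y‖ ≤ C)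
    {ε : ℝ} (hε : 0 ≤ ε) (hεC : C * ε ≤ r) (t₁ : ℝ) :
    ∃ γ : ℝ → E, γ t₁ = x ∧ IsIntegralCurveOn γ (fun _ ↦ f) (Icc (t₁ - ε) (t₁ + ε)) :=
  (IsPicardLindelof.of_time_independent (t₀ := ⟨t₁, by linarith, by linarith⟩) (r := 0) hC hK
    (by simpa using hεC)).exists_eq_forall_mem_Icc_hasDerivWithinAt₀

theorem LocallyLipschitz.exists_pos_forall_exists_isIntegralCurveOn [ProperSpace E] {f : E → E}
    (hf : LocallyLipschitz f) (ρ : ℝ) :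
    ∃ ε > 0, ∀ t₁, ∀ x ∈ closedBall (0 : E) ρ,
      ∃ γ : ℝ → E, γ t₁ = x ∧ IsIntegralCurveOn γ (fun _ ↦ f) (Icc (t₁ - ε) (t₁ + ε)) := by
  obtain ⟨K, hK⟩ :=
    hf.locallyLipschitzOn.exists_lipschitzOnWith_of_compact (isCompact_closedBall (0 : E) (ρ + 1))
  obtain ⟨C, hC⟩ :=
    (isCompact_closedBall (0 : E) (ρ + 1)).exists_bound_of_continuousOn hf.continuous.continuousOn
  set C' : ℝ≥0 := C.toNNReal + 1
  refine ⟨1 / C', by positivity, fun t₁ x hx ↦ ?_⟩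
  have hball : closedBall x (1 : ℝ≥0) ⊆ closedBall 0 (ρ + 1) :=
    closedBall_subset_closedBall' (by simpa [add_comm] using hx)
  exact exists_isIntegralCurveOn_Icc_of_lipschitzOnWith (C := C') (hK.mono hball)
    (fun y hy ↦ (hC y (hball hy)).trans ((le_coe_toNNReal C).trans (by simp [C'])))
    (by positivity) (by rw [mul_one_div_cancel (by positivity)]; simp) t₁

theorem LocallyLipschitz.exists_forall_hasDerivAt_of_forall_norm_le [ProperSpace E] {f : E → E}
    (hf : LocallyLipschitz f) {a : ℝ} {x₀ : E}
    (hbound : ∀ T, ∃ ρ, ∀ b ∈ Icc a T, ∀ γ : ℝ → E, γ a = x₀ →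
      IsIntegralCurveOn γ (fun _ ↦ f) (Icc a b) → ‖γ b‖ ≤ ρ) :
    ∃ γ : ℝ → E, γ a = x₀ ∧ ∀ t, a ≤ t → HasDerivAt γ (f (γ t)) t := by
  have hIcc (T : ℝ) : ∃ γ : ℝ → E, γ a = x₀ ∧ IsIntegralCurveOn γ (fun _ ↦ f) (Icc a T) := by
    obtain ⟨ρ, hρ⟩ := hbound (max T a)
    obtain ⟨ε, hε, hstep⟩ := hf.exists_pos_forall_exists_isIntegralCurveOn ρ
    obtain ⟨γ, hγ₀, hγ⟩ := exists_isIntegralCurveOn_Icc_of_forall_mem hε (le_max_right T a)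
      (fun t₁ x hx ↦ (hstep t₁ x hx).imp fun _ h ↦
        ⟨h.1, h.2.mono (Icc_subset_Icc_left (by linarith))⟩)
      (fun b hb γ hγ₀ hγ ↦ mem_closedBall_zero_iff.2 (hρ b hb γ hγ₀ hγ))
    exact ⟨γ, hγ₀, hγ.mono (Icc_subset_Icc_right (le_max_left T a))⟩
  obtain ⟨γ, hγ₀, hγ⟩ := exists_isIntegralCurveOn_Ici_of_forall_exists_Icc hIcc
    fun _ _ _ h₀ h h' ↦ h.eqOn_Icc_of_locallyLipschitz hf h' h₀
  -- a short backward piece makes the derivative at `a` two-sided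
  obtain ⟨ε, hε, hstep⟩ := hf.exists_pos_forall_exists_isIntegralCurveOn ‖x₀‖
  obtain ⟨β, hβ₀, hβ⟩ := hstep a x₀ (mem_closedBall_zero_iff.2 le_rfl)
  have hglue := (hβ.mono (Icc_subset_Icc_right (by linarith))).piecewise_le hγ (fun _ h ↦ h.2)
    (fun _ h ↦ h) ⟨by linarith, le_rfl⟩ self_mem_Ici (hβ₀.trans hγ₀.symm)
  rw [Icc_union_Ici_eq_Ici (by linarith)] at hglue
  exact ⟨_, by simp only [le_refl, if_true, hβ₀], fun t ht ↦
    (hglue t (mem_Ici.2 (by linarith))).hasDerivAt (Ici_mem_nhds (by linarith))⟩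

end IntegralCurve

section LinearGrowth

variable {u g : ℝ → ℝ} {a b : ℝ}

theorem eq_mul_exp_integral_of_hasDerivWithinAt
    (hu : ∀ t ∈ Icc a b, HasDerivWithinAt u (u t * g t) (Icc a b) t)
    (hg : ContinuousOn g (Icc a b)) :
    ∀ t ∈ Icc a b, u t = u a * exp (∫ s in a..t, g s) := by
  set G : ℝ → ℝ := fun t ↦ ∫ s in a..t, g s
  have hG (t : ℝ) (ht : t ∈ Icc a b) : HasDerivWithinAt G (g t) (Icc a b) t := by
    have : Fact (t ∈ Icc a b) := ⟨ht⟩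
    exact intervalIntegral.integral_hasDerivWithinAt_right
      (hg.mono (uIcc_subset_Icc ⟨le_rfl, ht.1.trans ht.2⟩ ht)).intervalIntegrable
      (hg.stronglyMeasurableAtFilter_nhdsWithin measurableSet_Icc t) (hg t ht)
  -- `u · exp (-G)` has zero derivative
  have hconst := constant_of_has_deriv_right_zero (f := fun t ↦ u t * exp (-G t))
    (fun t ht ↦ ((hu t ht).continuousWithinAt.mul (hG t ht).neg.exp.continuousWithinAt))
    fun t ht ↦ by
      have := ((hu t (Ico_subset_Icc_self ht)).mul (hG t (Ico_subset_Icc_self ht)).neg.exp)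
        |>.mono_of_mem_nhdsWithin (Icc_mem_nhdsGE_of_mem ht)
      exact this.congr_deriv (by ring)
  intro t ht
  have := hconst t ht
  simp only [G, intervalIntegral.integral_same, neg_zero, exp_zero, mul_one] at this
  rw [← this, mul_assoc, ← exp_add, neg_add_cancel, exp_zero, mul_one]

theorem nonneg_of_hasDerivWithinAt_mul
    (hu : ∀ t ∈ Icc a b, HasDerivWithinAt u (u t * g t) (Icc a b) t)
    (hg : ContinuousOn g (Icc a b)) (ha : 0 ≤ u a) : ∀ t ∈ Icc a b, 0 ≤ u t := fun t ht ↦ by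
  rw [eq_mul_exp_integral_of_hasDerivWithinAt hu hg t ht]
  positivity

theorem le_mul_exp_of_hasDerivWithinAt_mul
    (hu : ∀ t ∈ Icc a b, HasDerivWithinAt u (u t * g t) (Icc a b) t)
    (hg : ContinuousOn g (Icc a b)) (ha : 0 ≤ u a) {r : ℝ} (hgr : ∀ t ∈ Icc a b, g t ≤ r) :
    ∀ t ∈ Icc a b, u t ≤ u a * exp (r * (t - a)) := fun t ht ↦ by
  have hint : ∫ s in a..t, g s ≤ r * (t - a) := by
    have := intervalIntegral.integral_mono_on (μ := MeasureTheory.volume) ht.1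
      ((hg.mono (Icc_subset_Icc_right ht.2)).intervalIntegrable_of_Icc ht.1)
      intervalIntegrable_const fun s hs ↦ hgr s ⟨hs.1, hs.2.trans ht.2⟩
    simpa [mul_comm] using this
  rw [eq_mul_exp_integral_of_hasDerivWithinAt hu hg t ht]
  gcongr

end LinearGrowth

section Prod

variable {E F : Type*} [NormedAddCommGroup E] [NormedSpace ℝ E] [NormedAddCommGroup F]
  [NormedSpace ℝ F] {v : ℝ → E × F → E × F} {γ : ℝ → E × F} {s : Set ℝ}

theorem IsIntegralCurveOn.hasDerivWithinAt_fst (hγ : IsIntegralCurveOn γ v s) {t : ℝ}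
    (ht : t ∈ s) : HasDerivWithinAt (fun t ↦ (γ t).1) (v t (γ t)).1 s t := by
  simpa using (hγ t ht).hasFDerivWithinAt.fst.hasDerivWithinAt

theorem IsIntegralCurveOn.hasDerivWithinAt_snd (hγ : IsIntegralCurveOn γ v s) {t : ℝ}
    (ht : t ∈ s) : HasDerivWithinAt (fun t ↦ (γ t).2) (v t (γ t)).2 s t := by
  simpa using (hγ t ht).hasFDerivWithinAt.snd.hasDerivWithinAt

end Prod

section Kolmogorov

variable {G₁ G₂ : ℝ × ℝ → ℝ} {γ : ℝ → ℝ × ℝ} {a b : ℝ}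

theorem IsIntegralCurveOn.nonneg_of_kolmogorov (hG₁ : Continuous G₁) (hG₂ : Continuous G₂)
    (hγ : IsIntegralCurveOn γ (fun _ y ↦ (y.1 * G₁ y, y.2 * G₂ y)) (Icc a b)) (ha : 0 ≤ γ a) :
    ∀ t ∈ Icc a b, 0 ≤ γ t := fun t ht ↦
  ⟨nonneg_of_hasDerivWithinAt_mul (fun _ ↦ hγ.hasDerivWithinAt_fst)
      (hG₁.comp_continuousOn hγ.continuousOn) ha.1 t ht,
    nonneg_of_hasDerivWithinAt_mul (fun _ ↦ hγ.hasDerivWithinAt_snd)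
      (hG₂.comp_continuousOn hγ.continuousOn) ha.2 t ht⟩

theorem IsIntegralCurveOn.norm_le_of_kolmogorov (hG₁ : Continuous G₁) (hG₂ : Continuous G₂)
    (hγ : IsIntegralCurveOn γ (fun _ y ↦ (y.1 * G₁ y, y.2 * G₂ y)) (Icc a b)) (ha : 0 ≤ γ a)
    {r : ℝ} (hr : ∀ y, 0 ≤ y → G₁ y ≤ r ∧ G₂ y ≤ r) :
    ∀ t ∈ Icc a b, ‖γ t‖ ≤ ‖γ a‖ * exp (r * (t - a)) := fun t ht ↦ by
  have hpos := hγ.nonneg_of_kolmogorov hG₁ hG₂ ha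
  have h₁ := le_mul_exp_of_hasDerivWithinAt_mul (fun _ ↦ hγ.hasDerivWithinAt_fst)
    (hG₁.comp_continuousOn hγ.continuousOn) ha.1 (fun s hs ↦ (hr _ (hpos s hs)).1) t ht
  have h₂ := le_mul_exp_of_hasDerivWithinAt_mul (fun _ ↦ hγ.hasDerivWithinAt_snd)
    (hG₂.comp_continuousOn hγ.continuousOn) ha.2 (fun s hs ↦ (hr _ (hpos s hs)).2) t ht
  rw [Prod.norm_def, Real.norm_of_nonneg (hpos t ht).1, Real.norm_of_nonneg (hpos t ht).2]
  refine max_le (h₁.trans ?_) (h₂.trans ?_) <;> gcongr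
  · exact (le_abs_self _).trans (norm_fst_le (γ a))
  · exact (le_abs_self _).trans (norm_snd_le (γ a))

end Kolmogorov

section LotkaVolterra

variable {r₁ r₂ β₁ β₂ l₁₁ l₁₂ l₂₁ l₂₂ : ℝ} {γ : ℝ → ℝ × ℝ} {a b : ℝ}

theorem locallyLipschitz_LVfield : LocallyLipschitz (LVfield r₁ r₂ β₁ β₂ l₁₁ l₁₂ l₂₁ l₂₂) :=
  ContDiff.locallyLipschitz (𝕂 := ℝ) (by unfold LVfield; fun_prop)

theorem IsIntegralCurveOn.nonneg_of_LVfield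
    (hγ : IsIntegralCurveOn γ (fun _ ↦ LVfield r₁ r₂ β₁ β₂ l₁₁ l₁₂ l₂₁ l₂₂) (Icc a b))
    (ha : 0 ≤ γ a) : ∀ t ∈ Icc a b, 0 ≤ γ t :=
  hγ.nonneg_of_kolmogorov (by fun_prop) (by fun_prop) ha

theorem IsIntegralCurveOn.norm_le_of_LVfield (hβ₁ : 0 ≤ β₁) (hβ₂ : 0 ≤ β₂) (hl₁₁ : 0 ≤ l₁₁)
    (hl₁₂ : 0 ≤ l₁₂) (hl₂₁ : 0 ≤ l₂₁) (hl₂₂ : 0 ≤ l₂₂)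
    (hγ : IsIntegralCurveOn γ (fun _ ↦ LVfield r₁ r₂ β₁ β₂ l₁₁ l₁₂ l₂₁ l₂₂) (Icc a b))
    (ha : 0 ≤ γ a) : ∀ t ∈ Icc a b, ‖γ t‖ ≤ ‖γ a‖ * exp ((|r₁| + |r₂|) * (t - a)) :=
  hγ.norm_le_of_kolmogorov (by fun_prop) (by fun_prop) ha fun y ⟨hy₁, hy₂⟩ ↦ by
    constructor <;> nlinarith [le_abs_self r₁, le_abs_self r₂, abs_nonneg r₁, abs_nonneg r₂,
      mul_nonneg hβ₁ (add_nonneg (mul_nonneg hl₁₁ hy₁) (mul_nonneg hl₁₂ hy₂)),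
      mul_nonneg hβ₂ (add_nonneg (mul_nonneg hl₂₁ hy₁) (mul_nonneg hl₂₂ hy₂))]

end LotkaVolterra

theorem lotkaVolterra_existence_uniqueness_general
    (r₁ r₂ β₁ β₂ l₁₁ l₁₂ l₂₁ l₂₂ : ℝ)
    (hβ₁ : 0 < β₁) (hβ₂ : 0 < β₂)
    (hl₁₁ : 0 ≤ l₁₁) (hl₁₂ : 0 ≤ l₁₂) (hl₂₁ : 0 ≤ l₂₁) (hl₂₂ : 0 ≤ l₂₂)
    (t₀ : ℝ)
    (y₀ : ℝ × ℝ) (hy₀ : 0 ≤ y₀.1 ∧ 0 ≤ y₀.2) :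
    ∃ y : ℝ → ℝ × ℝ,
      y t₀ = y₀ ∧
      (∀ t : ℝ, t₀ ≤ t →
        HasDerivAt y (LVfield r₁ r₂ β₁ β₂ l₁₁ l₁₂ l₂₁ l₂₂ (y t)) t) ∧
      (∀ t : ℝ, t₀ ≤ t → 0 ≤ (y t).1 ∧ 0 ≤ (y t).2) ∧
      (∀ z : ℝ → ℝ × ℝ, z t₀ = y₀ →
        (∀ t : ℝ, t₀ ≤ t →
          HasDerivAt z (LVfield r₁ r₂ β₁ β₂ l₁₁ l₁₂ l₂₁ l₂₂ (z t)) t) →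
        ∀ t : ℝ, t₀ ≤ t → z t = y t) := by
  have hcurve {γ : ℝ → ℝ × ℝ}
      (hγ : ∀ t, t₀ ≤ t → HasDerivAt γ (LVfield r₁ r₂ β₁ β₂ l₁₁ l₁₂ l₂₁ l₂₂ (γ t)) t) (T : ℝ) :
      IsIntegralCurveOn γ (fun _ ↦ LVfield r₁ r₂ β₁ β₂ l₁₁ l₁₂ l₂₁ l₂₂) (Icc t₀ T) :=
    fun t ht ↦ (hγ t ht.1).hasDerivWithinAt
  have hc : LocallyLipschitz (LVfield r₁ r₂ β₁ β₂ l₁₁ l₁₂ l₂₁ l₂₂) := locallyLipschitz_LVfield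
  obtain ⟨y, hyt₀, hy⟩ := hc.exists_forall_hasDerivAt_of_forall_norm_le (a := t₀) (x₀ := y₀)
    fun T ↦ ⟨‖y₀‖ * exp ((|r₁| + |r₂|) * (T - t₀)), fun b hb γ hγ₀ hγ ↦ by
      have := hγ.norm_le_of_LVfield hβ₁.le hβ₂.le hl₁₁ hl₁₂ hl₂₁ hl₂₂ (hγ₀ ▸ hy₀) b
        ⟨hb.1, le_rfl⟩
      rw [hγ₀] at this
      exact this.trans (by gcongr; exact hb.2)⟩
  refine ⟨y, hyt₀, hy, fun t ht ↦ ?_, fun z hz₀ hz t ht ↦ ?_⟩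
  · exact (hcurve hy t).nonneg_of_LVfield (hyt₀ ▸ hy₀) t ⟨ht, le_rfl⟩
  · exact (hcurve hz t).eqOn_Icc_of_locallyLipschitz hc (hcurve hy t)
      (hz₀.trans hyt₀.symm) ⟨ht, le_rfl⟩

/-- Global existence, uniqueness and positivity for the Lotka–Volterra system: for any
`t₀ ≥ 0` and initial value `y₀` in the closed nonnegative quadrant, there is a solution
`y` of `y' = c(y)` on `[t₀,∞)` with `y(t₀) = y₀`, taking values in the quadrant, and any
other solution with the same initial value coincides with it on `[t₀,∞)`. -/
theorem lotkaVolterra_existence_uniqueness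
    (r₁ r₂ β₁ β₂ l₁₁ l₁₂ l₂₁ l₂₂ : ℝ)
    (hβ₁ : 0 < β₁) (hβ₂ : 0 < β₂)
    (hl₁₁ : 0 ≤ l₁₁) (hl₁₂ : 0 ≤ l₁₂) (hl₂₁ : 0 ≤ l₂₁) (hl₂₂ : 0 ≤ l₂₂)
    (t₀ : ℝ) (ht₀ : 0 ≤ t₀)
    (y₀ : ℝ × ℝ) (hy₀ : 0 ≤ y₀.1 ∧ 0 ≤ y₀.2) :
    ∃ y : ℝ → ℝ × ℝ,
      y t₀ = y₀ ∧
      (∀ t : ℝ, t₀ ≤ t →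
        HasDerivAt y (LVfield r₁ r₂ β₁ β₂ l₁₁ l₁₂ l₂₁ l₂₂ (y t)) t) ∧
      (∀ t : ℝ, t₀ ≤ t → 0 ≤ (y t).1 ∧ 0 ≤ (y t).2) ∧
      (∀ z : ℝ → ℝ × ℝ, z t₀ = y₀ →
        (∀ t : ℝ, t₀ ≤ t →
          HasDerivAt z (LVfield r₁ r₂ β₁ β₂ l₁₁ l₁₂ l₂₁ l₂₂ (z t)) t) →
        ∀ t : ℝ, t₀ ≤ t → z t = y t) :=
  lotkaVolterra_existence_uniqueness_general r₁ r₂ β₁ β₂ l₁₁ l₁₂ l₂₁ l₂₂ hβ₁ hβ₂ hl₁₁ hl₁₂ hl₂₁ hl₂₂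
    t₀ y₀ hy₀
end

section
/- Fix real parameters r₁, r₂ ∈ ℝ, β₁, β₂ > 0 and nonnegative λ₁₁, λ₁₂, λ₂₁, λ₂₂. Let y = (y₁, y₂) : [t₀,∞) → ℝ₊² be a solution of the Lotka–Volterra system, and for i ∈ {1,2} let zᵢ : [t₀,∞) → ℝ be the solution of the decoupled logistic equation zᵢ'(t) = rᵢ·zᵢ(t) − βᵢ·λ_{ii}·zᵢ(t)² with zᵢ(t₀) = yᵢ(t₀). Then yᵢ(t) ≤ zᵢ(t) for all t ≥ t₀ and i ∈ {1,2}. -/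
/-!
Subtracting the logistic equation from the first Lotka–Volterra equation gives
`(y₁ - z₁)' = (r₁ - β₁λ₁₁(y₁ + z₁)) (y₁ - z₁) - β₁λ₁₂ y₁ y₂`, and the last term is nonnegative on
the quadrant. So `w = y₁ - z₁` satisfies the linear differential inequality `w' ≤ g w` with
continuous `g` and `w(t₀) = 0`; with `G' = g`, the function `w e^{-G}` is antitone, hence `w ≤ 0`.
The same argument applies to the second species.
-/

open Set

theorem ContinuousOn.exists_hasDerivAt_Ici {g : ℝ → ℝ} {t₀ : ℝ}
    (hg : ContinuousOn g (Ici t₀)) : ∃ G : ℝ → ℝ, ∀ t, t₀ ≤ t → HasDerivAt G (g t) t := by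
  have hext : Continuous fun s => g (max s t₀) :=
    hg.comp_continuous (continuous_id.max continuous_const) fun s => le_max_right s t₀
  refine ⟨fun u => ∫ s in t₀..u, g (max s t₀), fun t ht => ?_⟩
  simpa [max_eq_left ht] using (hext.integral_hasStrictDerivAt t₀ t).hasDerivAt

theorem nonpos_of_hasDerivAt_le_mul {t₀ : ℝ} {w w' g : ℝ → ℝ} (hg : ContinuousOn g (Ici t₀))
    (hw : ∀ t, t₀ ≤ t → HasDerivAt w (w' t) t) (hw' : ∀ t, t₀ ≤ t → w' t ≤ g t * w t)
    (h₀ : w t₀ ≤ 0) : ∀ t, t₀ ≤ t → w t ≤ 0 := by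
  obtain ⟨G, hG⟩ := hg.exists_hasDerivAt_Ici
  set F : ℝ → ℝ := fun t => w t * Real.exp (-G t)
  set F' : ℝ → ℝ := fun t => (w' t - g t * w t) * Real.exp (-G t)
  have hF : ∀ t, t₀ ≤ t → HasDerivAt F (F' t) t := fun t ht =>
    ((hw t ht).mul (hG t ht).neg.exp).congr_deriv (by simp only [F', Pi.neg_apply]; ring)
  have hF' : ∀ t, t₀ ≤ t → F' t ≤ 0 := fun t ht =>
    mul_nonpos_of_nonpos_of_nonneg (sub_nonpos.2 (hw' t ht)) (Real.exp_pos _).le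
  have hanti : AntitoneOn F (Ici t₀) :=
    antitoneOn_of_hasDerivWithinAt_nonpos (convex_Ici t₀)
      (fun t ht => (hF t ht).continuousAt.continuousWithinAt)
      (fun t ht => (hF t (interior_subset ht)).hasDerivWithinAt)
      (fun t ht => hF' t (interior_subset ht))
  intro t ht
  have hFt : F t ≤ 0 :=
    (hanti self_mem_Ici ht ht).trans (mul_nonpos_of_nonpos_of_nonneg h₀ (Real.exp_pos _).le)
  exact nonpos_of_mul_nonpos_left hFt (Real.exp_pos _)

theorem le_of_logistic_subsolution {r a t₀ : ℝ} {y y' z : ℝ → ℝ}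
    (hy : ∀ t, t₀ ≤ t → HasDerivAt y (y' t) t) (hy' : ∀ t, t₀ ≤ t → y' t ≤ r * y t - a * y t ^ 2)
    (hz : ∀ t, t₀ ≤ t → HasDerivAt z (r * z t - a * z t ^ 2) t) (h₀ : y t₀ ≤ z t₀) :
    ∀ t, t₀ ≤ t → y t ≤ z t := by
  have hcont : ContinuousOn (fun t => r - a * (y t + z t)) (Ici t₀) := fun t ht =>
    (continuousAt_const.sub (continuousAt_const.mul
      ((hy t ht).continuousAt.add (hz t ht).continuousAt))).continuousWithinAt
  have key := nonpos_of_hasDerivAt_le_mul hcont (fun t ht => (hy t ht).sub (hz t ht))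
    (fun t ht => by simp only [Pi.sub_apply]; linear_combination hy' t ht) (sub_nonpos.2 h₀)
  exact fun t ht => sub_nonpos.1 (key t ht)

theorem lotkaVolterra_logistic_domination_general
    (r₁ r₂ β₁ β₂ l₁₁ l₁₂ l₂₁ l₂₂ : ℝ)
    (hβ₁ : 0 < β₁) (hβ₂ : 0 < β₂)
    (hl₁₂ : 0 ≤ l₁₂) (hl₂₁ : 0 ≤ l₂₁)
    (t₀ : ℝ) (y₁ y₂ z₁ z₂ : ℝ → ℝ)
    (hderiv₁ : ∀ t : ℝ, t₀ ≤ t →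
      HasDerivAt y₁ (y₁ t * (r₁ - β₁ * (l₁₁ * y₁ t + l₁₂ * y₂ t))) t)
    (hderiv₂ : ∀ t : ℝ, t₀ ≤ t →
      HasDerivAt y₂ (y₂ t * (r₂ - β₂ * (l₂₁ * y₁ t + l₂₂ * y₂ t))) t)
    (hquad : ∀ t : ℝ, t₀ ≤ t → 0 ≤ y₁ t ∧ 0 ≤ y₂ t)
    (hz₁ : ∀ t : ℝ, t₀ ≤ t →
      HasDerivAt z₁ (r₁ * z₁ t - β₁ * l₁₁ * (z₁ t) ^ 2) t)
    (hz₂ : ∀ t : ℝ, t₀ ≤ t →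
      HasDerivAt z₂ (r₂ * z₂ t - β₂ * l₂₂ * (z₂ t) ^ 2) t)
    (hz₁0 : z₁ t₀ = y₁ t₀) (hz₂0 : z₂ t₀ = y₂ t₀) :
    ∀ t : ℝ, t₀ ≤ t → y₁ t ≤ z₁ t ∧ y₂ t ≤ z₂ t := by
  have hcompetition : ∀ t, t₀ ≤ t → 0 ≤ β₁ * l₁₂ * y₁ t * y₂ t ∧ 0 ≤ β₂ * l₂₁ * y₁ t * y₂ t :=
    fun t ht => by
      obtain ⟨h₁, h₂⟩ := hquad t ht
      exact ⟨by positivity, by positivity⟩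
  have hsub₁ := le_of_logistic_subsolution hderiv₁
    (fun t ht => by linear_combination (hcompetition t ht).1) hz₁ hz₁0.ge
  have hsub₂ := le_of_logistic_subsolution hderiv₂
    (fun t ht => by linear_combination (hcompetition t ht).2) hz₂ hz₂0.ge
  exact fun t ht => ⟨hsub₁ t ht, hsub₂ t ht⟩

/-- Comparison of a Lotka–Volterra solution with the decoupled logistic equations:
if `y = (y₁, y₂) : [t₀,∞) → ℝ₊²` solves the Lotka–Volterra system and, for
`i ∈ {1,2}`, `zᵢ` solves `zᵢ' = rᵢ·zᵢ − βᵢ·λ_{ii}·zᵢ²` with `zᵢ(t₀) = yᵢ(t₀)`,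
then `yᵢ(t) ≤ zᵢ(t)` for all `t ≥ t₀`. -/
theorem lotkaVolterra_logistic_domination
    (r₁ r₂ β₁ β₂ l₁₁ l₁₂ l₂₁ l₂₂ : ℝ)
    (hβ₁ : 0 < β₁) (hβ₂ : 0 < β₂)
    (hl₁₁ : 0 ≤ l₁₁) (hl₁₂ : 0 ≤ l₁₂) (hl₂₁ : 0 ≤ l₂₁) (hl₂₂ : 0 ≤ l₂₂)
    (t₀ : ℝ) (y₁ y₂ z₁ z₂ : ℝ → ℝ)
    (hderiv₁ : ∀ t : ℝ, t₀ ≤ t →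
      HasDerivAt y₁ (y₁ t * (r₁ - β₁ * (l₁₁ * y₁ t + l₁₂ * y₂ t))) t)
    (hderiv₂ : ∀ t : ℝ, t₀ ≤ t →
      HasDerivAt y₂ (y₂ t * (r₂ - β₂ * (l₂₁ * y₁ t + l₂₂ * y₂ t))) t)
    (hquad : ∀ t : ℝ, t₀ ≤ t → 0 ≤ y₁ t ∧ 0 ≤ y₂ t)
    (hz₁ : ∀ t : ℝ, t₀ ≤ t →
      HasDerivAt z₁ (r₁ * z₁ t - β₁ * l₁₁ * (z₁ t) ^ 2) t)
    (hz₂ : ∀ t : ℝ, t₀ ≤ t →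
      HasDerivAt z₂ (r₂ * z₂ t - β₂ * l₂₂ * (z₂ t) ^ 2) t)
    (hz₁0 : z₁ t₀ = y₁ t₀) (hz₂0 : z₂ t₀ = y₂ t₀) :
    ∀ t : ℝ, t₀ ≤ t → y₁ t ≤ z₁ t ∧ y₂ t ≤ z₂ t :=
  lotkaVolterra_logistic_domination_general r₁ r₂ β₁ β₂ l₁₁ l₁₂ l₂₁ l₂₂ hβ₁ hβ₂ hl₁₂ hl₂₁ t₀ y₁ y₂
    z₁ z₂ hderiv₁ hderiv₂ hquad hz₁ hz₂ hz₁0 hz₂0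
end

section
/- Fix real parameters r₁, r₂ ∈ ℝ, β₁, β₂ > 0 and nonnegative λ₁₁, λ₁₂, λ₂₁, λ₂₂ with λ₁₁ > 0 and λ₂₂ > 0. Then every solution y : [t₀,∞) → ℝ₊² of the Lotka–Volterra system is bounded: sup_{t ≥ t₀} (y₁(t) + y₂(t)) < ∞. -/
/-!
Each species is dominated by a logistic equation: since the other population is nonnegative,
`yᵢ' ≤ yᵢ (rᵢ - βᵢ lᵢᵢ yᵢ)`, so `yᵢ` decreases whenever it exceeds `rᵢ / (βᵢ lᵢᵢ)` and therefore
never rises above `max (yᵢ t₀) (rᵢ / (βᵢ lᵢᵢ))`.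
-/

theorem le_of_hasDerivAt_neg_of_lt {f f' : ℝ → ℝ} {a K : ℝ}
    (hf : ∀ t, a ≤ t → HasDerivAt f (f' t) t) (ha : f a ≤ K)
    (hneg : ∀ t, a ≤ t → K < f t → f' t < 0) :
    ∀ t, a ≤ t → f t ≤ K := by
  intro t ht
  -- The strict fence theorem needs `f' < 0` on the barrier itself, so raise the barrier by `ε`.
  refine le_of_forall_pos_le_add fun ε hε => ?_
  refine image_le_of_deriv_right_lt_deriv_boundary' (B := fun _ => K + ε) (B' := 0)
    (fun s hs => (hf s hs.1).continuousAt.continuousWithinAt)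
    (fun s hs => (hf s hs.1).hasDerivWithinAt) (by linarith) continuousOn_const
    (fun _ _ => hasDerivWithinAt_const _ _ _)
    (fun s hs hfs => hneg s hs.1 (by linarith)) ⟨ht, le_rfl⟩

theorem le_max_of_hasDerivAt_mul_of_neg {y g : ℝ → ℝ} {a c : ℝ}
    (hy : ∀ t, a ≤ t → HasDerivAt y (y t * g t) t) (hya : 0 ≤ y a)
    (hg : ∀ t, a ≤ t → c < y t → g t < 0) :
    ∀ t, a ≤ t → y t ≤ max (y a) c := by
  refine le_of_hasDerivAt_neg_of_lt hy (le_max_left _ _) fun t ht hlt => ?_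
  have hpos : 0 < y t := hya.trans_lt ((le_max_left _ _).trans_lt hlt)
  exact mul_neg_of_pos_of_neg hpos (hg t ht ((le_max_right _ _).trans_lt hlt))

theorem competitionRate_neg_of_div_lt {r β l l' y z : ℝ} (hβ : 0 < β) (hl : 0 < l)
    (hl' : 0 ≤ l') (hz : 0 ≤ z) (hy : r / (β * l) < y) :
    r - β * (l * y + l' * z) < 0 := by
  have hr : r < β * l * y := (div_lt_iff₀' (mul_pos hβ hl)).mp hy
  nlinarith [mul_nonneg (mul_nonneg hβ.le hl') hz]

/-- Boundedness of Lotka–Volterra solutions: with `β₁, β₂ > 0`, `λ₁₁, λ₂₂ > 0` and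
`λ₁₂, λ₂₁ ≥ 0`, every solution `y = (y₁, y₂) : [t₀,∞) → ℝ₊²` of the Lotka–Volterra
system is bounded: `sup_{t ≥ t₀} (y₁(t) + y₂(t)) < ∞`. -/
theorem lotkaVolterra_solutions_bounded
    (r₁ r₂ β₁ β₂ l₁₁ l₁₂ l₂₁ l₂₂ : ℝ)
    (hβ₁ : 0 < β₁) (hβ₂ : 0 < β₂)
    (hl₁₁ : 0 < l₁₁) (hl₁₂ : 0 ≤ l₁₂) (hl₂₁ : 0 ≤ l₂₁) (hl₂₂ : 0 < l₂₂)
    (t₀ : ℝ) (y₁ y₂ : ℝ → ℝ)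
    (hderiv₁ : ∀ t : ℝ, t₀ ≤ t →
      HasDerivAt y₁ (y₁ t * (r₁ - β₁ * (l₁₁ * y₁ t + l₁₂ * y₂ t))) t)
    (hderiv₂ : ∀ t : ℝ, t₀ ≤ t →
      HasDerivAt y₂ (y₂ t * (r₂ - β₂ * (l₂₁ * y₁ t + l₂₂ * y₂ t))) t)
    (hquad : ∀ t : ℝ, t₀ ≤ t → 0 ≤ y₁ t ∧ 0 ≤ y₂ t) :
    ∃ M : ℝ, ∀ t : ℝ, t₀ ≤ t → y₁ t + y₂ t ≤ M := by
  have hbound₁ := le_max_of_hasDerivAt_mul_of_neg hderiv₁ (hquad t₀ le_rfl).1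
    fun t ht hlt => competitionRate_neg_of_div_lt hβ₁ hl₁₁ hl₁₂ (hquad t ht).2 hlt
  have hbound₂ := le_max_of_hasDerivAt_mul_of_neg hderiv₂ (hquad t₀ le_rfl).2
    fun t ht hlt => by
      rw [add_comm]
      exact competitionRate_neg_of_div_lt hβ₂ hl₂₂ hl₂₁ (hquad t ht).1 hlt
  exact ⟨_, fun t ht => add_le_add (hbound₁ t ht) (hbound₂ t ht)⟩
end

section
/- Fix real parameters r₁, r₂ > 0, β₁, β₂ > 0 and nonnegative λ₁₁, λ₁₂, λ₂₁, λ₂₂ with λ₁₁ > 0 and λ₂₂ > 0, and assume the competitive-exclusion conditions: r₂β₁λ₁₁ < r₁β₂λ₂₁ and r₁β₂λ₂₂ > r₂β₁λ₁₂. Then every solution y : [t₀,∞) → ℝ₊² of the Lotka–Volterra system with y₁(t₀) > 0 converges, as t → ∞, to the boundary equilibrium (r₁/(β₁λ₁₁), 0). -/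
/-!
Both populations stay bounded, and `y₁` stays positive since its per capita growth rate is
bounded below. The exclusion conditions provide `c > 0` for which the combination
`g₂ - c g₁` of the per capita growth rates is uniformly negative on the quadrant, so the
Lyapunov function `y₂ y₁ ^ (-c)` decays exponentially, and `y₂ → 0` because `y₁` is bounded.
Then `y₁` solves a logistic equation whose intrinsic rate `r₁ - β₁λ₁₂y₂` tends to `r₁`, and
comparing `log y₁` with levels on either side of `r₁ / (β₁λ₁₁)` shows that it converges there.
-/

open Filter Set Real Topology

theorem le_gronwallBound_of_hasDerivAt_le {f F : ℝ → ℝ} {a K ε : ℝ}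
    (hf : ∀ t ≥ a, HasDerivAt f (F t) t) (hF : ∀ t ≥ a, F t ≤ K * f t + ε) :
    ∀ t ≥ a, f t ≤ gronwallBound (f a) K ε (t - a) := fun t ht =>
  le_gronwallBound_of_liminf_deriv_right_le
    (fun s hs => (hf s hs.1).continuousAt.continuousWithinAt)
    (fun s hs _ hr => (hf s hs.1).hasDerivWithinAt.liminf_right_slope_le hr) le_rfl
    (fun s hs => hF s hs.1) t ⟨ht, le_rfl⟩

theorem le_const_of_hasDerivAt_neg_of_eq {f F : ℝ → ℝ} {a θ : ℝ}
    (hf : ∀ t ≥ a, HasDerivAt f (F t) t) (hF : ∀ t ≥ a, f t = θ → F t < 0) (ha : f a ≤ θ) :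
    ∀ t ≥ a, f t ≤ θ := fun _ ht =>
  image_le_of_deriv_right_lt_deriv_boundary' (B := fun _ => θ) (B' := 0)
    (fun s hs => (hf s hs.1).continuousAt.continuousWithinAt)
    (fun s hs => (hf s hs.1).hasDerivWithinAt) ha continuousOn_const
    (fun _ _ => hasDerivWithinAt_const _ _ _) (fun s hs => hF s hs.1) ⟨ht, le_rfl⟩

theorem eventually_le_of_hasDerivAt_le_neg {f F : ℝ → ℝ} {θ m : ℝ} (hm : 0 < m)
    (hf : ∀ᶠ t in atTop, HasDerivAt f (F t) t) (hF : ∀ᶠ t in atTop, θ ≤ f t → F t ≤ -m) :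
    ∀ᶠ t in atTop, f t ≤ θ := by
  obtain ⟨a, ha⟩ := eventually_atTop.1 (hf.and hF)
  obtain ⟨t₁, ht₁, hθ⟩ : ∃ t₁ ≥ a, f t₁ ≤ θ := by
    by_contra! hgt
    have hlin := le_gronwallBound_of_hasDerivAt_le (K := 0) (ε := -m) (fun t ht => (ha t ht).1)
      (fun t ht => by simpa using (ha t ht).2 (hgt t ht).le)
    have hbot : Tendsto (fun t => f a + -m * (t - a)) atTop atBot :=
      tendsto_atBot_add_const_left _ _
        ((tendsto_id.atTop_add tendsto_const_nhds).const_mul_atTop_of_neg (neg_neg_of_pos hm))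
    obtain ⟨t, hlt, ht⟩ := ((hbot.eventually_lt_atBot θ).and (eventually_ge_atTop a)).exists
    have := hlin t ht
    rw [gronwallBound_K0] at this
    linarith [hgt t ht]
  filter_upwards [eventually_ge_atTop t₁] with t ht
  exact le_const_of_hasDerivAt_neg_of_eq (fun s hs => (ha s (ht₁.trans hs)).1)
    (fun s hs hs' => ((ha s (ht₁.trans hs)).2 hs'.ge).trans_lt (neg_neg_of_pos hm)) hθ t ht

theorem exists_le_of_hasDerivAt_mul_of_le_sub_mul {y g : ℝ → ℝ} {t₀ r a : ℝ} (ha : 0 < a)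
    (hy : ∀ t ≥ t₀, HasDerivAt y (y t * g t) t) (hg : ∀ t ≥ t₀, g t ≤ r - a * y t) :
    ∃ M, ∀ t ≥ t₀, y t ≤ M := by
  set M := max (y t₀) ((|r| + 1) / a)
  have hM : |r| + 1 ≤ a * M := by
    rw [← div_le_iff₀' ha]
    exact le_max_right _ _
  refine ⟨M, le_const_of_hasDerivAt_neg_of_eq hy (fun t ht hyt => ?_) (le_max_left _ _)⟩
  have hMpos : 0 < M := (div_pos (by positivity) ha).trans_le (le_max_right _ _)
  have hgneg : g t < 0 := by
    linarith [hyt ▸ hg t ht, le_abs_self r]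
  rw [hyt]
  exact mul_neg_of_pos_of_neg hMpos hgneg

theorem pos_of_hasDerivAt_mul_of_le {y g : ℝ → ℝ} {t₀ k : ℝ}
    (hy : ∀ t ≥ t₀, HasDerivAt y (y t * g t) t) (hnonneg : ∀ t ≥ t₀, 0 ≤ y t)
    (hg : ∀ t ≥ t₀, k ≤ g t) (h₀ : 0 < y t₀) : ∀ t ≥ t₀, 0 < y t := by
  intro t ht
  have := le_gronwallBound_of_hasDerivAt_le (f := fun s => -y s) (K := k) (ε := 0)
    (fun s hs => (hy s hs).neg) (fun s hs => by nlinarith [hnonneg s hs, hg s hs]) t ht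
  rw [gronwallBound_ε0] at this
  nlinarith [exp_pos (k * (t - t₀))]

theorem HasDerivAt.mul_rpow_of_eq_mul {u v : ℝ → ℝ} {a b p t : ℝ}
    (hu : HasDerivAt u (u t * a) t) (hv : HasDerivAt v (v t * b) t) (hpos : 0 < u t) :
    HasDerivAt (fun s => v s * u s ^ p) (v t * u t ^ p * (b + p * a)) t := by
  refine (hv.mul (hu.rpow_const (Or.inl hpos.ne'))).congr_deriv ?_
  rw [rpow_sub_one hpos.ne']
  field_simp

theorem tendsto_zero_of_growth_rate_sub_mul_le_neg {y₁ y₂ g₁ g₂ : ℝ → ℝ} {t₀ c ε M : ℝ}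
    (hc : 0 ≤ c) (hε : 0 < ε)
    (hy₁ : ∀ t ≥ t₀, HasDerivAt y₁ (y₁ t * g₁ t) t) (hy₂ : ∀ t ≥ t₀, HasDerivAt y₂ (y₂ t * g₂ t) t)
    (hy₁pos : ∀ t ≥ t₀, 0 < y₁ t) (hy₁M : ∀ t ≥ t₀, y₁ t ≤ M) (hy₂nonneg : ∀ t ≥ t₀, 0 ≤ y₂ t)
    (hg : ∀ t ≥ t₀, g₂ t - c * g₁ t ≤ -ε) :
    Tendsto y₂ atTop (𝓝 0) := by
  set W := fun t => y₂ t * y₁ t ^ (-c)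
  have hWnonneg : ∀ t ≥ t₀, 0 ≤ W t := fun t ht =>
    mul_nonneg (hy₂nonneg t ht) (rpow_nonneg (hy₁pos t ht).le _)
  -- `W` is the Lyapunov function: its logarithmic derivative is `g₂ - c g₁ ≤ -ε`.
  have hW : ∀ t ≥ t₀, W t ≤ W t₀ * exp (-ε * (t - t₀)) := by
    intro t ht
    have := le_gronwallBound_of_hasDerivAt_le (f := W) (K := -ε) (ε := 0)
      (fun s hs => (hy₁ s hs).mul_rpow_of_eq_mul (hy₂ s hs) (hy₁pos s hs))
      (fun s hs => by nlinarith [hg s hs, hWnonneg s hs]) t ht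
    rwa [gronwallBound_ε0] at this
  have hy₂W : ∀ t ≥ t₀, y₂ t ≤ W t₀ * M ^ c * exp (-ε * (t - t₀)) := by
    intro t ht
    have hpos := hy₁pos t ht
    calc y₂ t = W t * y₁ t ^ c := by
          simp only [W, mul_assoc, ← rpow_add hpos, neg_add_cancel, rpow_zero, mul_one]
      _ ≤ W t₀ * exp (-ε * (t - t₀)) * M ^ c :=
          mul_le_mul (hW t ht) (rpow_le_rpow hpos.le (hy₁M t ht) hc) (by positivity)
            ((hWnonneg t ht).trans (hW t ht))
      _ = W t₀ * M ^ c * exp (-ε * (t - t₀)) := by ring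
  have hexp : Tendsto (fun t => W t₀ * M ^ c * exp (-ε * (t - t₀))) atTop (𝓝 0) := by
    have hlin : Tendsto (fun t => -ε * (t - t₀)) atTop atBot :=
      (tendsto_atTop_add_const_right _ _ tendsto_id).const_mul_atTop_of_neg (neg_neg_of_pos hε)
    simpa using (tendsto_exp_atBot.comp hlin).const_mul (W t₀ * M ^ c)
  exact tendsto_of_tendsto_of_tendsto_of_le_of_le' tendsto_const_nhds hexp
    (eventually_atTop.2 ⟨t₀, hy₂nonneg⟩) (eventually_atTop.2 ⟨t₀, hy₂W⟩)

theorem tendsto_of_hasDerivAt_logistic {y ρ : ℝ → ℝ} {t₀ r a : ℝ} (hr : 0 < r) (ha : 0 < a)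
    (hρ : Tendsto ρ atTop (𝓝 r)) (hy : ∀ t ≥ t₀, HasDerivAt y (y t * (ρ t - a * y t)) t)
    (hpos : ∀ t ≥ t₀, 0 < y t) : Tendsto y atTop (𝓝 (r / a)) := by
  have hpos' : ∀ᶠ t in atTop, 0 < y t := eventually_atTop.2 ⟨t₀, hpos⟩
  have hlog : ∀ᶠ t in atTop, HasDerivAt (fun s => log (y s)) (ρ t - a * y t) t :=
    eventually_atTop.2 ⟨t₀, fun t ht => by
      simpa [(hpos t ht).ne'] using (hy t ht).log (hpos t ht).ne'⟩
  have hK : a * (r / a) = r := mul_div_cancel₀ r ha.ne'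
  -- On either side of `r / a`, past a level `θ` the drift of `log y` points back towards `r / a`
  -- at a rate bounded away from `0`.
  refine tendsto_order.2 ⟨fun b hb => ?_, fun b hb => ?_⟩
  · rcases le_or_gt b 0 with hb0 | hb0
    · exact hpos'.mono fun t ht => hb0.trans_lt ht
    obtain ⟨θ, hbθ, hθ⟩ := exists_between hb
    have hm : 0 < a * (r / a - θ) := mul_pos ha (sub_pos.2 hθ)
    have hρ' := hρ.eventually (lt_mem_nhds (show r - a * (r / a - θ) / 2 < r by linarith))
    have hlow := eventually_le_of_hasDerivAt_le_neg (half_pos hm) (θ := -log θ)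
      (hlog.mono fun t h => h.neg) (by
        filter_upwards [hρ', hpos'] with t hρt ht hle
        have : y t ≤ θ := (log_le_log_iff ht (hb0.trans hbθ)).1 (neg_le_neg_iff.1 hle)
        nlinarith)
    filter_upwards [hlow, hpos'] with t hle ht
    exact hbθ.trans_le ((log_le_log_iff (hb0.trans hbθ) ht).1 (neg_le_neg_iff.1 hle))
  · obtain ⟨θ, hθ, hθb⟩ := exists_between hb
    have hθpos : 0 < θ := (div_pos hr ha).trans hθ
    have hm : 0 < a * (θ - r / a) := mul_pos ha (sub_pos.2 hθ)
    have hρ' := hρ.eventually (gt_mem_nhds (show r < r + a * (θ - r / a) / 2 by linarith))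
    have hup := eventually_le_of_hasDerivAt_le_neg (half_pos hm) (θ := log θ) hlog (by
        filter_upwards [hρ', hpos'] with t hρt ht hle
        have : θ ≤ y t := (log_le_log_iff hθpos ht).1 hle
        nlinarith)
    filter_upwards [hup, hpos'] with t hle ht
    exact ((log_le_log_iff ht hθpos).1 hle).trans_lt hθb

theorem exists_growth_rate_combination_le_neg {r₁ r₂ β₁ β₂ l₁₁ l₁₂ l₂₁ l₂₂ : ℝ}
    (hr₁ : 0 < r₁) (hr₂ : 0 < r₂)
    (hexcl₁ : r₂ * β₁ * l₁₁ < r₁ * β₂ * l₂₁) (hexcl₂ : r₂ * β₁ * l₁₂ < r₁ * β₂ * l₂₂) :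
    ∃ c > 0, ∃ ε > 0, ∀ x₁ x₂ : ℝ, 0 ≤ x₁ → 0 ≤ x₂ →
      r₂ - β₂ * (l₂₁ * x₁ + l₂₂ * x₂) - c * (r₁ - β₁ * (l₁₁ * x₁ + l₁₂ * x₂)) ≤ -ε := by
  -- The exclusion conditions say that `c = r₂ / r₁` satisfies `c β₁ λ₁ⱼ < β₂ λ₂ⱼ` strictly,
  -- so a slightly larger `c` still satisfies them and also makes `r₂ - c r₁` negative.
  set c₀ := r₂ / r₁
  have h₁ : c₀ * (β₁ * l₁₁) < β₂ * l₂₁ := by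
    rw [div_mul_eq_mul_div, div_lt_iff₀ hr₁]; linarith
  have h₂ : c₀ * (β₁ * l₁₂) < β₂ * l₂₂ := by
    rw [div_mul_eq_mul_div, div_lt_iff₀ hr₁]; linarith
  obtain ⟨c, hc, hc₁, hc₂⟩ : ∃ c, c₀ < c ∧ c * (β₁ * l₁₁) < β₂ * l₂₁ ∧ c * (β₁ * l₁₂) < β₂ * l₂₂ :=
    ((eventually_mem_nhdsWithin (s := Ioi c₀)).and (nhdsWithin_le_nhds
      (((tendsto_id.mul_const _).eventually_lt_const h₁).and
        ((tendsto_id.mul_const _).eventually_lt_const h₂)))).exists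
  have hcr : r₂ < c * r₁ := (div_lt_iff₀ hr₁).1 hc
  refine ⟨c, (div_pos hr₂ hr₁).trans hc, c * r₁ - r₂, sub_pos.2 hcr, fun x₁ x₂ hx₁ hx₂ => ?_⟩
  nlinarith [mul_nonneg (sub_nonneg.2 hc₁.le) hx₁, mul_nonneg (sub_nonneg.2 hc₂.le) hx₂]

/-- Competitive exclusion for the Lotka–Volterra system: with `r₁, r₂ > 0`,
`β₁, β₂ > 0`, `λ₁₁, λ₂₂ > 0`, `λ₁₂, λ₂₁ ≥ 0`, and under the exclusion conditions
`r₂β₁λ₁₁ < r₁β₂λ₂₁` and `r₁β₂λ₂₂ > r₂β₁λ₁₂`, every solution in the nonnegative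
quadrant with `y₁(t₀) > 0` converges, as `t → ∞`, to the boundary equilibrium
`(r₁/(β₁λ₁₁), 0)`. -/
theorem lotkaVolterra_competitive_exclusion
    (r₁ r₂ β₁ β₂ l₁₁ l₁₂ l₂₁ l₂₂ : ℝ)
    (hr₁ : 0 < r₁) (hr₂ : 0 < r₂) (hβ₁ : 0 < β₁) (hβ₂ : 0 < β₂)
    (hl₁₁ : 0 < l₁₁) (hl₁₂ : 0 ≤ l₁₂) (hl₂₁ : 0 ≤ l₂₁) (hl₂₂ : 0 < l₂₂)
    (hexcl₁ : r₂ * β₁ * l₁₁ < r₁ * β₂ * l₂₁)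
    (hexcl₂ : r₂ * β₁ * l₁₂ < r₁ * β₂ * l₂₂) :
    ∀ (t₀ : ℝ) (y₁ y₂ : ℝ → ℝ),
      (∀ t : ℝ, t₀ ≤ t →
        HasDerivAt y₁ (y₁ t * (r₁ - β₁ * (l₁₁ * y₁ t + l₁₂ * y₂ t))) t) →
      (∀ t : ℝ, t₀ ≤ t →
        HasDerivAt y₂ (y₂ t * (r₂ - β₂ * (l₂₁ * y₁ t + l₂₂ * y₂ t))) t) →
      (∀ t : ℝ, t₀ ≤ t → 0 ≤ y₁ t ∧ 0 ≤ y₂ t) →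
      0 < y₁ t₀ →
      Tendsto (fun t => (y₁ t, y₂ t)) atTop (nhds (r₁ / (β₁ * l₁₁), 0)) := by
  intro t₀ y₁ y₂ hy₁ hy₂ hnonneg h₀
  have hβl₁₂ : ∀ t ≥ t₀, 0 ≤ β₁ * (l₁₂ * y₂ t) := fun t ht => by
    have := (hnonneg t ht).2; positivity
  have hβl₂₁ : ∀ t ≥ t₀, 0 ≤ β₂ * (l₂₁ * y₁ t) := fun t ht => by
    have := (hnonneg t ht).1; positivity
  obtain ⟨M₁, hM₁⟩ := exists_le_of_hasDerivAt_mul_of_le_sub_mul (r := r₁) (mul_pos hβ₁ hl₁₁) hy₁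
    fun t ht => by linarith [hβl₁₂ t ht]
  obtain ⟨M₂, hM₂⟩ := exists_le_of_hasDerivAt_mul_of_le_sub_mul (r := r₂) (mul_pos hβ₂ hl₂₂) hy₂
    fun t ht => by linarith [hβl₂₁ t ht]
  have hy₁pos := pos_of_hasDerivAt_mul_of_le hy₁ (fun t ht => (hnonneg t ht).1)
    (k := r₁ - β₁ * (l₁₁ * M₁ + l₁₂ * M₂)) (fun t ht => by
      have := mul_le_mul_of_nonneg_left (hM₁ t ht) hl₁₁.le
      have := mul_le_mul_of_nonneg_left (hM₂ t ht) hl₁₂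
      nlinarith) h₀
  obtain ⟨c, hc, ε, hε, hrates⟩ := exists_growth_rate_combination_le_neg hr₁ hr₂ hexcl₁ hexcl₂
  have hy₂lim := tendsto_zero_of_growth_rate_sub_mul_le_neg hc.le hε hy₁ hy₂ hy₁pos hM₁
    (fun t ht => (hnonneg t ht).2) fun t ht => hrates _ _ (hnonneg t ht).1 (hnonneg t ht).2
  have hy₁lim := tendsto_of_hasDerivAt_logistic hr₁ (mul_pos hβ₁ hl₁₁)
    (ρ := fun t => r₁ - β₁ * l₁₂ * y₂ t) (by simpa using (hy₂lim.const_mul (β₁ * l₁₂)).const_sub r₁)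
    (fun t ht => (hy₁ t ht).congr_deriv (by ring)) hy₁pos
  exact hy₁lim.prodMk_nhds hy₂lim
end

section
/- Let B, D, α, U be positive real constants with R := B − D > 0, and fix Lotka–Volterra parameters r₁, r₂ ∈ ℝ, β₁, β₂ > 0 and nonnegative λ₁₁, λ₁₂, λ₂₁, λ₂₂ such that there exists π ∈ ℝ₊² with φ^{s,y}(t) → π as t → ∞ for every s ≥ 0 and y ∈ ℝ₊², where φ^{s,y} is the unique global Lotka–Volterra solution with φ^{s,y}(s) = y. Let (v_t)_{t ≥ 0} be a family of finite nonnegative Borel measures on ℝ₊² such that: (i) sup_{t ≥ 0} v_t(ℝ₊²) < ∞; (ii) the total mass m_t := v_t(ℝ₊²) is differentiable in t, satisfies m₀ > 0 and m_t' = m_t(R − αU·m_t) for all t ≥ 0; and (iii) for every bounded continuous g : ℝ₊² → ℝ and every t ≥ 0 the mild equation ∫ g dv_t = ∫ g(φ^{0,y}(t)) dv₀(y) + ∫₀ᵗ (R − αU·m_s)·(∫ g(φ^{s,y}(t)) dv_s(y)) ds holds. Then v_t converges weakly, as t → ∞, to the measure (R/(αU))·δ_π, i.e. ∫ g dv_t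 → (R/(αU))·g(π) for every bounded continuous g. -/
open MeasureTheory Filter Set Topology

/-! The total mass solves the logistic equation `m' = m (R - αU m)`, whose reciprocal solves a
linear equation; so `1 / m_t = αU/R + (1/m₀ - αU/R) e^{-Rt}`, hence `m_t → R/(αU)` and the
coefficient `R - αU m_t` of the mild equation decays exponentially. For `g` vanishing at `π`,
every `∫ g(φ^{s,y}(t)) dv_s(y)` tends to `0` by dominated convergence, since trajectories
converge to `π`; the Volterra term then tends to `0` by dominated convergence in `s`, with
the integrable majorant `|R - αU m_s| ‖g‖ sup_t v_t(ℝ₊²)`. Finally split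
`g = (g - g(π)) + g(π)`. -/

section Logistic

variable {R a m₀ t : ℝ}

/-- The reciprocal of the solution of `m' = m (R - a m)`, `m 0 = m₀`; it solves
`u' = a - R u`. -/
noncomputable def logisticRecip (R a m₀ t : ℝ) : ℝ :=
  a / R + (m₀⁻¹ - a / R) * Real.exp (-(R * t))

theorem logisticRecip_zero : logisticRecip R a m₀ 0 = m₀⁻¹ := by simp [logisticRecip]

theorem hasDerivAt_logisticRecip (hR : R ≠ 0) :
    HasDerivAt (logisticRecip R a m₀) (a - R * logisticRecip R a m₀ t) t := by
  refine ((((hasDerivAt_id t).const_mul R).neg.exp).const_mul (m₀⁻¹ - a / R)).const_add (a / R)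
    |>.congr_deriv ?_
  simp only [logisticRecip, Pi.neg_apply, id]
  field_simp
  ring

theorem min_le_logisticRecip (hR : 0 < R) (ht : 0 ≤ t) :
    min (a / R) m₀⁻¹ ≤ logisticRecip R a m₀ t := by
  have he : Real.exp (-(R * t)) ≤ 1 := Real.exp_le_one_iff.mpr (by nlinarith)
  have he0 := Real.exp_pos (-(R * t))
  unfold logisticRecip
  rcases le_total (a / R) m₀⁻¹ with h | h
  · exact (min_le_left _ _).trans (le_add_of_nonneg_right (mul_nonneg (sub_nonneg.2 h) he0.le))
  · exact (min_le_right _ _).trans (by nlinarith)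

theorem tendsto_logisticRecip (hR : 0 < R) :
    Tendsto (logisticRecip R a m₀) atTop (𝓝 (a / R)) := by
  have : Tendsto (fun t => Real.exp (-(R * t))) atTop (𝓝 0) :=
    Real.tendsto_exp_atBot.comp (tendsto_neg_atTop_atBot.comp (tendsto_id.const_mul_atTop hR))
  have h := (this.const_mul (m₀⁻¹ - a / R)).const_add (a / R)
  rwa [mul_zero, add_zero] at h

theorem eq_inv_logisticRecip {m : ℝ → ℝ} {C : ℝ} (ha : 0 < a) (hR : 0 < R) (hm0 : 0 < m 0)
    (hm_bdd : ∀ t, 0 ≤ t → |m t| ≤ C)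
    (hm : ∀ t, 0 ≤ t → HasDerivAt m (m t * (R - a * m t)) t) (ht : 0 ≤ t) :
    m t = (logisticRecip R a (m 0) t)⁻¹ := by
  set u := logisticRecip R a (m 0)
  have hmin : 0 < min (a / R) (m 0)⁻¹ := lt_min (div_pos ha hR) (inv_pos.2 hm0)
  have hu_pos : ∀ s, 0 ≤ s → 0 < u s := fun s hs => hmin.trans_le (min_le_logisticRecip hR hs)
  set B := max C (min (a / R) (m 0)⁻¹)⁻¹
  obtain ⟨K, hK⟩ : ∃ K, LipschitzOnWith K (fun x : ℝ => x * (R - a * x)) (Icc (-B) B) :=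
    (ContDiff.locallyLipschitz (𝕂 := ℝ) (by fun_prop)).locallyLipschitzOn
      |>.exists_lipschitzOnWith_of_compact isCompact_Icc
  have hm_mem : ∀ s, 0 ≤ s → m s ∈ Icc (-B) B := fun s hs =>
    abs_le.1 ((hm_bdd s hs).trans (le_max_left _ _))
  have hu_mem : ∀ s, 0 ≤ s → (u s)⁻¹ ∈ Icc (-B) B := fun s hs => by
    refine abs_le.1 ?_
    rw [abs_inv, abs_of_pos (hu_pos s hs)]
    exact (inv_anti₀ hmin (min_le_logisticRecip hR hs)).trans (le_max_right _ _)
  have hu_deriv :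
      ∀ s, 0 ≤ s → HasDerivAt (fun s => (u s)⁻¹) ((u s)⁻¹ * (R - a * (u s)⁻¹)) s := by
    intro s hs
    have hne : u s ≠ 0 := (hu_pos s hs).ne'
    refine ((hasDerivAt_logisticRecip hR.ne').inv hne).congr_deriv ?_
    simp only [u] at hne ⊢
    field_simp
    ring
  refine ODE_solution_unique_of_mem_Icc_right (v := fun _ x => x * (R - a * x))
    (s := fun _ => Icc (-B) B) (fun _ _ => hK)
    (fun s hs => (hm s hs.1).continuousAt.continuousWithinAt)
    (fun s hs => (hm s hs.1).hasDerivWithinAt) (fun s hs => hm_mem s hs.1)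
    (fun s hs => (hu_deriv s hs.1).continuousAt.continuousWithinAt)
    (fun s hs => (hu_deriv s hs.1).hasDerivWithinAt) (fun s hs => hu_mem s hs.1)
    (by simp [u, logisticRecip_zero]) ⟨ht, le_rfl⟩

theorem tendsto_of_logistic {m : ℝ → ℝ} {C : ℝ} (ha : 0 < a) (hR : 0 < R) (hm0 : 0 < m 0)
    (hm_bdd : ∀ t, 0 ≤ t → |m t| ≤ C)
    (hm : ∀ t, 0 ≤ t → HasDerivAt m (m t * (R - a * m t)) t) :
    Tendsto m atTop (𝓝 (R / a)) := by
  have := (tendsto_logisticRecip (m₀ := m 0) hR).inv₀ (div_pos ha hR).ne'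
  rw [inv_div] at this
  exact this.congr' ((eventually_ge_atTop 0).mono fun t ht =>
    (eq_inv_logisticRecip ha hR hm0 hm_bdd hm ht).symm)

theorem integrableOn_sub_mul_of_logistic {m : ℝ → ℝ} {C : ℝ} (ha : 0 < a) (hR : 0 < R)
    (hm0 : 0 < m 0)
    (hm_bdd : ∀ t, 0 ≤ t → |m t| ≤ C)
    (hm : ∀ t, 0 ≤ t → HasDerivAt m (m t * (R - a * m t)) t) :
    IntegrableOn (fun t => R - a * m t) (Ioi 0) := by
  set c := (m 0)⁻¹ - a / R
  set κ := min (a / R) (m 0)⁻¹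
  have hmin : 0 < κ := lt_min (div_pos ha hR) (inv_pos.2 hm0)
  have hbound : ∀ t ∈ Ioi (0 : ℝ), ‖R - a * m t‖ ≤ R * |c| / κ * Real.exp (-R * t) := by
    intro t ht
    have hu := min_le_logisticRecip (a := a) (m₀ := m 0) hR ht.le
    have hu_pos := hmin.trans_le hu
    have hdefect : R - a * m t = R * c * Real.exp (-(R * t)) / logisticRecip R a (m 0) t := by
      rw [eq_inv_logisticRecip ha hR hm0 hm_bdd hm ht.le, eq_div_iff hu_pos.ne']
      field_simp
      simp only [logisticRecip, c]
      field_simp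
      ring
    rw [hdefect, Real.norm_eq_abs, abs_div, abs_mul, abs_mul, abs_of_pos hR,
      abs_of_pos (Real.exp_pos _), abs_of_pos hu_pos, neg_mul, mul_div_right_comm]
    gcongr
  refine Integrable.mono' ((exp_neg_integrableOn_Ioi 0 hR).const_mul _) ?_
    (ae_restrict_of_forall_mem measurableSet_Ioi hbound)
  refine ContinuousOn.aestronglyMeasurable (fun t ht => ?_) measurableSet_Ioi
  exact (continuousAt_const.sub ((hm t ht.le).continuousAt.const_mul a)).continuousWithinAt

end Logistic

section Dominated

variable {E : Type*} [NormedAddCommGroup E] [NormedSpace ℝ E]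

/-- No measurability is needed: where `F i` is not integrable its integral is `0` anyway. -/
theorem tendsto_integral_zero_of_dominated {α ι : Type*} [MeasurableSpace α] {μ : Measure α}
    {l : Filter ι} [l.IsCountablyGenerated] {F : ι → α → E} {bound : α → ℝ}
    (hb : Integrable bound μ) (h_bound : ∀ i, ∀ᵐ x ∂μ, ‖F i x‖ ≤ bound x)
    (h_lim : ∀ᵐ x ∂μ, Tendsto (fun i => F i x) l (𝓝 0)) :
    Tendsto (fun i => ∫ x, F i x ∂μ) l (𝓝 0) := by
  classical
  set S := {i | Integrable (F i) μ}
  have h_int : Tendsto (fun i => ∫ x, F i x ∂μ) (l ⊓ 𝓟 S) (𝓝 0) := by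
    simpa using tendsto_integral_filter_of_dominated_convergence bound
      (eventually_inf_principal.2 (.of_forall fun i hi => hi.aestronglyMeasurable))
      (.of_forall h_bound) hb (h_lim.mono fun x hx => hx.mono_left inf_le_left)
  have h_undef : Tendsto (fun i => ∫ x, F i x ∂μ) (l ⊓ 𝓟 Sᶜ) (𝓝 0) :=
    tendsto_const_nhds.congr'
      (eventually_inf_principal.2 (.of_forall fun i hi => (integral_undef hi).symm))
  simpa only [piecewise_same] using h_int.piecewise h_undef

theorem tendsto_intervalIntegral_zero_of_dominated {F : ℝ → ℝ → E} {bound : ℝ → ℝ}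
    (hb : IntegrableOn bound (Ioi 0)) (h_bound : ∀ t, ∀ s ∈ Ioi (0 : ℝ), ‖F t s‖ ≤ bound s)
    (h_lim : ∀ s ∈ Ioi (0 : ℝ), Tendsto (fun t => F t s) atTop (𝓝 0)) :
    Tendsto (fun t => ∫ s in 0..t, F t s) atTop (𝓝 0) := by
  have h := tendsto_integral_zero_of_dominated (μ := volume.restrict (Ioi 0))
    (F := fun t => (Ioc 0 t).indicator (F t)) hb
    (fun t => ae_restrict_of_forall_mem measurableSet_Ioi fun s hs =>
      (norm_indicator_le_norm_self _ _).trans (h_bound t s hs))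
    (ae_restrict_of_forall_mem measurableSet_Ioi fun s hs =>
      (h_lim s hs).congr' ((eventually_ge_atTop s).mono fun t hst =>
        (indicator_of_mem (show s ∈ Ioc 0 t from ⟨hs, hst⟩) _).symm))
  refine h.congr' ((eventually_ge_atTop 0).mono fun t ht => ?_)
  rw [integral_indicator measurableSet_Ioc, Measure.restrict_restrict measurableSet_Ioc,
    inter_eq_left.2 Ioc_subset_Ioi_self]
  exact (intervalIntegral.integral_of_le ht).symm

end Dominated

theorem tendsto_integral_zero_of_mild {X : Type*} [TopologicalSpace X] [MeasurableSpace X]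
    {φ : ℝ → X → ℝ → X} {π : X} {v : ℝ → Measure X} [∀ t, IsFiniteMeasure (v t)]
    {w : ℝ → ℝ} {C : ℝ} {h : BoundedContinuousFunction X ℝ} (hπ : h π = 0)
    (hφ_lim : ∀ s, 0 ≤ s → ∀ᵐ y ∂(v s), Tendsto (φ s y) atTop (𝓝 π))
    (hv_bdd : ∀ s, 0 ≤ s → (v s).real univ ≤ C) (hw : IntegrableOn w (Ioi 0))
    (hmild : ∀ t, 0 ≤ t → ∫ y, h y ∂(v t) =
      ∫ y, h (φ 0 y t) ∂(v 0) + ∫ s in 0..t, w s * ∫ y, h (φ s y t) ∂(v s)) :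
    Tendsto (fun t => ∫ y, h y ∂(v t)) atTop (𝓝 0) := by
  have hJ_lim : ∀ s, 0 ≤ s → Tendsto (fun t => ∫ y, h (φ s y t) ∂(v s)) atTop (𝓝 0) :=
    fun s hs => tendsto_integral_zero_of_dominated (integrable_const ‖h‖)
      (fun _ => .of_forall fun _ => h.norm_coe_le_norm _)
      ((hφ_lim s hs).mono fun y hy => hπ ▸ (h.continuous.tendsto π).comp hy)
  have hJ_le : ∀ s, 0 ≤ s → ∀ t, ‖∫ y, h (φ s y t) ∂(v s)‖ ≤ ‖h‖ * C := fun s hs t =>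
    (norm_integral_le_of_norm_le_const (.of_forall fun _ => h.norm_coe_le_norm _)).trans
      (mul_le_mul_of_nonneg_left (hv_bdd s hs) (norm_nonneg h))
  have hvolterra := tendsto_intervalIntegral_zero_of_dominated
    (F := fun t s => w s * ∫ y, h (φ s y t) ∂(v s)) (hw.norm.mul_const (‖h‖ * C))
    (fun t s hs => by
      rw [norm_mul]
      exact mul_le_mul_of_nonneg_left (hJ_le s hs.le t) (norm_nonneg _))
    (fun s hs => by simpa using (hJ_lim s hs.le).const_mul (w s))
  simpa using ((hJ_lim 0 le_rfl).add hvolterra).congr'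
    ((eventually_ge_atTop 0).mono fun t ht => (hmild t ht).symm)

theorem meanField_convergence_to_dirac_equilibrium_general
    (α U : ℝ) (hα : 0 < α) (hU : 0 < U)
    (R : ℝ) (hRpos : 0 < R)
    -- `φ s y` is the unique global Lotka–Volterra solution with `φ s y s = y`:
    (φ : ℝ → ℝ × ℝ → ℝ → ℝ × ℝ)
    -- every trajectory converges to the equilibrium `π ∈ ℝ₊²`:
    (π : ℝ × ℝ)
    (hφ_lim : ∀ s : ℝ, 0 ≤ s → ∀ y : ℝ × ℝ, 0 ≤ y.1 → 0 ≤ y.2 →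
      Tendsto (fun t => φ s y t) atTop (nhds π))
    -- the family of finite measures `(v_t)` on `ℝ₊²`:
    (v : ℝ → Measure (ℝ × ℝ))
    (hv_fin : ∀ t : ℝ, IsFiniteMeasure (v t))
    (hv_quad : ∀ t : ℝ, 0 ≤ t → v t {y : ℝ × ℝ | ¬ (0 ≤ y.1 ∧ 0 ≤ y.2)} = 0)
    -- (i) uniformly bounded total masses:
    (hv_bdd : ∃ C : ℝ, ∀ t : ℝ, 0 ≤ t → ((v t) Set.univ).toReal ≤ C)
    -- (ii) the total mass follows the logistic equation:
    (m : ℝ → ℝ) (hm_def : ∀ t : ℝ, m t = ((v t) Set.univ).toReal)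
    (hm0 : 0 < m 0)
    (hm_deriv : ∀ t : ℝ, 0 ≤ t → HasDerivAt m (m t * (R - α * U * m t)) t)
    -- (iii) the mild equation:
    (hmild : ∀ g : BoundedContinuousFunction (ℝ × ℝ) ℝ, ∀ t : ℝ, 0 ≤ t →
      ∫ y, g y ∂(v t) =
        (∫ y, g (φ 0 y t) ∂(v 0)) +
        ∫ s in (0:ℝ)..t, (R - α * U * m s) * ∫ y, g (φ s y t) ∂(v s)) :
    -- conclusion: weak convergence of `v_t` to `(R/(αU))·δ_π`:
    ∀ g : BoundedContinuousFunction (ℝ × ℝ) ℝ,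
      Tendsto (fun t => ∫ y, g y ∂(v t)) atTop (nhds ((R / (α * U)) * g π)) := by
  intro g
  obtain ⟨C, hC⟩ := hv_bdd
  have ha : 0 < α * U := mul_pos hα hU
  have hm_bdd : ∀ t, 0 ≤ t → |m t| ≤ C := fun t ht => by
    rw [hm_def, abs_of_nonneg ENNReal.toReal_nonneg]
    exact hC t ht
  set h := g - BoundedContinuousFunction.const (ℝ × ℝ) (g π)
  have hh : Tendsto (fun t => ∫ y, h y ∂(v t)) atTop (𝓝 0) :=
    tendsto_integral_zero_of_mild (by simp [h])
      (fun s hs => (ae_iff.2 (hv_quad s hs)).mono fun y hy => hφ_lim s hs y hy.1 hy.2) hC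
      (integrableOn_sub_mul_of_logistic ha hRpos hm0 hm_bdd hm_deriv) (hmild h)
  have hg : ∀ t, ∫ y, g y ∂(v t) = ∫ y, h y ∂(v t) + m t * g π := fun t => by
    simp [h, integral_sub (g.integrable _) (integrable_const _), hm_def, measureReal_def]
  simpa [hg] using hh.add ((tendsto_of_logistic ha hRpos hm0 hm_bdd hm_deriv).mul_const (g π))

/-- Convergence of the mean-field deterministic measure flow towards the singular
measure concentrated on the Lotka–Volterra equilibrium: if every Lotka–Volterra
trajectory converges to an equilibrium `π`, the total mass `m_t = v_t(ℝ₊²)` follows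
the logistic equation `m' = m(R − αU m)` with `m₀ > 0`, the masses are uniformly
bounded, and `(v_t)` satisfies the mild equation, then `v_t → (R/(αU))·δ_π` weakly
as `t → ∞`. -/
theorem meanField_convergence_to_dirac_equilibrium
    (B D α U : ℝ) (hB : 0 < B) (hD : 0 < D) (hα : 0 < α) (hU : 0 < U)
    (R : ℝ) (hR : R = B - D) (hRpos : 0 < R)
    (r₁ r₂ β₁ β₂ l₁₁ l₁₂ l₂₁ l₂₂ : ℝ)
    (hβ₁ : 0 < β₁) (hβ₂ : 0 < β₂)
    (hl₁₁ : 0 ≤ l₁₁) (hl₁₂ : 0 ≤ l₁₂) (hl₂₁ : 0 ≤ l₂₁) (hl₂₂ : 0 ≤ l₂₂)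
    -- `φ s y` is the unique global Lotka–Volterra solution with `φ s y s = y`:
    (φ : ℝ → ℝ × ℝ → ℝ → ℝ × ℝ)
    (hφ_init : ∀ s : ℝ, 0 ≤ s → ∀ y : ℝ × ℝ, 0 ≤ y.1 → 0 ≤ y.2 → φ s y s = y)
    (hφ_deriv : ∀ s : ℝ, 0 ≤ s → ∀ y : ℝ × ℝ, 0 ≤ y.1 → 0 ≤ y.2 →
      ∀ t : ℝ, s ≤ t →
        HasDerivAt (φ s y)
          ((φ s y t).1 * (r₁ - β₁ * (l₁₁ * (φ s y t).1 + l₁₂ * (φ s y t).2)),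
           (φ s y t).2 * (r₂ - β₂ * (l₂₁ * (φ s y t).1 + l₂₂ * (φ s y t).2))) t)
    (hφ_quad : ∀ s : ℝ, 0 ≤ s → ∀ y : ℝ × ℝ, 0 ≤ y.1 → 0 ≤ y.2 →
      ∀ t : ℝ, s ≤ t → 0 ≤ (φ s y t).1 ∧ 0 ≤ (φ s y t).2)
    (hφ_uniq : ∀ s : ℝ, 0 ≤ s → ∀ y : ℝ × ℝ, 0 ≤ y.1 → 0 ≤ y.2 →
      ∀ z : ℝ → ℝ × ℝ, z s = y →
        (∀ t : ℝ, s ≤ t →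
          HasDerivAt z
            ((z t).1 * (r₁ - β₁ * (l₁₁ * (z t).1 + l₁₂ * (z t).2)),
             (z t).2 * (r₂ - β₂ * (l₂₁ * (z t).1 + l₂₂ * (z t).2))) t) →
        ∀ t : ℝ, s ≤ t → z t = φ s y t)
    -- every trajectory converges to the equilibrium `π ∈ ℝ₊²`:
    (π : ℝ × ℝ) (hπ : 0 ≤ π.1 ∧ 0 ≤ π.2)
    (hφ_lim : ∀ s : ℝ, 0 ≤ s → ∀ y : ℝ × ℝ, 0 ≤ y.1 → 0 ≤ y.2 →
      Tendsto (fun t => φ s y t) atTop (nhds π))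
    -- the family of finite measures `(v_t)` on `ℝ₊²`:
    (v : ℝ → Measure (ℝ × ℝ))
    (hv_fin : ∀ t : ℝ, IsFiniteMeasure (v t))
    (hv_quad : ∀ t : ℝ, 0 ≤ t → v t {y : ℝ × ℝ | ¬ (0 ≤ y.1 ∧ 0 ≤ y.2)} = 0)
    -- (i) uniformly bounded total masses:
    (hv_bdd : ∃ C : ℝ, ∀ t : ℝ, 0 ≤ t → ((v t) Set.univ).toReal ≤ C)
    -- (ii) the total mass follows the logistic equation:
    (m : ℝ → ℝ) (hm_def : ∀ t : ℝ, m t = ((v t) Set.univ).toReal)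
    (hm0 : 0 < m 0)
    (hm_deriv : ∀ t : ℝ, 0 ≤ t → HasDerivAt m (m t * (R - α * U * m t)) t)
    -- (iii) the mild equation:
    (hmild : ∀ g : BoundedContinuousFunction (ℝ × ℝ) ℝ, ∀ t : ℝ, 0 ≤ t →
      ∫ y, g y ∂(v t) =
        (∫ y, g (φ 0 y t) ∂(v 0)) +
        ∫ s in (0:ℝ)..t, (R - α * U * m s) * ∫ y, g (φ s y t) ∂(v s)) :
    -- conclusion: weak convergence of `v_t` to `(R/(αU))·δ_π`:
    ∀ g : BoundedContinuousFunction (ℝ × ℝ) ℝ,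
      Tendsto (fun t => ∫ y, g y ∂(v t)) atTop (nhds ((R / (α * U)) * g π)) :=
  meanField_convergence_to_dirac_equilibrium_general α U hα hU R hRpos φ π hφ_lim v hv_fin hv_quad
    hv_bdd m hm_def hm0 hm_deriv hmild
end
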